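/- In the full observation model, for an arbitrary but fixed control strategy g and each i = 1,…,n, define R^i_t = (X^i_t, Z_{1:t}, U_{1:t-1}). Then the instantaneous conditional cost simplifies: for every t and every realization with positive probability, E[c_t(Z_t, X_t, U_t) | R^i_{1:t} = r^i_{1:t}, U^i_{1:t} = u^i_{1:t}] = E[c_t(Z_t, X_t, U_t) | R^i_t = r^i_t, U^i_t = u^i_t]. -/
import Mathlib


open scoped Classical

namespace ControlSharing

variable {n T : ℕ}
variable {Z : Type} [Fintype Z] [Nonempty Z]
variable {X : Fin n → Type} [∀ i, Fintype (X i)] [∀ i, Nonempty (X i)]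
variable {U : Fin n → Type} [∀ i, Fintype (U i)] [∀ i, Nonempty (U i)]
variable {W0 : Type} [Fintype W0] [Nonempty W0]
variable {W : Fin n → Type} [∀ i, Fintype (W i)] [∀ i, Nonempty (W i)]

/-- A probability weight function on a finite type. -/
def IsLaw {α : Type} [Fintype α] (P : α → ℝ) : Prop :=
  (∀ a, 0 ≤ P a) ∧ ∑ a, P a = 1

/-- Sample space of primitive random variables: the initial shared state `Z₁`, the initial
local states `X₁ⁱ`, the shared-dynamics noises `W⁰_t` and the local noises `Wⁱ_t`. -/
abbrev Omega (T : ℕ) (Z : Type) (X : Fin n → Type) (W0 : Type) (W : Fin n → Type) : Type :=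
  Z × (∀ i, X i) × (Fin T → W0) × (∀ i, Fin T → W i)

/-- The probability weight of a sample point: `Z₁ ~ P_Z`; conditionally on `Z₁` the initial
local states are independent, `X₁ⁱ ~ P_{Xⁱ|Z}(·|Z₁)`; all noises are independent with laws
`P_{W⁰}`, `P_{Wⁱ}`, independent of the initial states. -/
noncomputable def weight (PZ : Z → ℝ) (PX : ∀ i, Z → X i → ℝ) (PW0 : W0 → ℝ)
    (PW : ∀ i, W i → ℝ) (ω : Omega T Z X W0 W) : ℝ :=
  PZ ω.1 * (∏ i, PX i ω.1 (ω.2.1 i)) * (∏ t, PW0 (ω.2.2.1 t)) *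
    (∏ i, ∏ t, PW i (ω.2.2.2 i t))

/-- A general control strategy: station `i` chooses `Uⁱ_t = gⁱ_t(Z_{1:t}, Xⁱ_{1:t}, U_{1:t-1})`. -/
def Strategy (Z : Type) (X U : Fin n → Type) : Type :=
  ∀ (i : Fin n) (t : ℕ), (Fin (t + 1) → Z) → (Fin (t + 1) → X i) →
    (Fin t → ∀ j, U j) → U i

variable (f0 : ℕ → Z → (∀ j, U j) → W0 → Z)
variable (f : ∀ i, ℕ → Z → X i → (∀ j, U j) → W i → X i)

/-- The closed-loop trajectory: histories `(Z_{1:t+1}, X_{1:t+1}, U_{1:t+1})` generated by the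
dynamics `Z_{t+1} = f⁰_t(Z_t, U_t, W⁰_t)`, `Xⁱ_{t+1} = fⁱ_t(Z_t, Xⁱ_t, U_t, Wⁱ_t)` and the
strategy `g`. -/
noncomputable def traj (g : Strategy Z X U) (ω : Omega T Z X W0 W) :
    (t : ℕ) → (Fin (t + 1) → Z) × (∀ i, Fin (t + 1) → X i) × (Fin (t + 1) → ∀ j, U j)
  | 0 =>
    let zh : Fin 1 → Z := fun _ => ω.1
    let xh : ∀ i, Fin 1 → X i := fun i _ => ω.2.1 i
    ⟨zh, xh, fun _ j => g j 0 zh (xh j) (fun s => s.elim0)⟩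
  | t + 1 =>
    let prev := traj g ω t
    let ucur := prev.2.2 (Fin.last t)
    let znew := f0 t (prev.1 (Fin.last t)) ucur
      (if h : t < T then ω.2.2.1 ⟨t, h⟩ else Classical.arbitrary W0)
    let xnew : ∀ i, X i := fun i =>
      f i t (prev.1 (Fin.last t)) (prev.2.1 i (Fin.last t)) ucur
        (if h : t < T then ω.2.2.2 i ⟨t, h⟩ else Classical.arbitrary (W i))
    let zh : Fin (t + 2) → Z := Fin.snoc prev.1 znew
    let xh : ∀ i, Fin (t + 2) → X i := fun i => Fin.snoc (prev.2.1 i) (xnew i)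
    ⟨zh, xh, Fin.snoc prev.2.2 (fun j => g j (t + 1) zh (xh j) prev.2.2)⟩

/-- The shared state process `Z_t`. -/
noncomputable def Zp (g : Strategy Z X U) (t : ℕ) (ω : Omega T Z X W0 W) : Z :=
  (traj f0 f g ω t).1 (Fin.last t)

/-- The local state process `Xⁱ_t`. -/
noncomputable def Xp (g : Strategy Z X U) (i : Fin n) (t : ℕ) (ω : Omega T Z X W0 W) : X i :=
  (traj f0 f g ω t).2.1 i (Fin.last t)

/-- The action process `Uⁱ_t`. -/
noncomputable def Up (g : Strategy Z X U) (i : Fin n) (t : ℕ) (ω : Omega T Z X W0 W) : U i :=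
  (traj f0 f g ω t).2.2 (Fin.last t) i

/-- Probability of an event under a weight function. -/
noncomputable def Pr {Ω : Type} [Fintype Ω] (μ : Ω → ℝ) (A : Ω → Prop) : ℝ :=
  ∑ ω : Ω, if A ω then μ ω else 0

/-- Conditional probability `P(A | B)`. -/
noncomputable def CondPr {Ω : Type} [Fintype Ω] (μ : Ω → ℝ) (A B : Ω → Prop) : ℝ :=
  Pr μ (fun ω => A ω ∧ B ω) / Pr μ B

/-- Conditional expectation `E[h | B]`. -/
noncomputable def CondExp {Ω : Type} [Fintype Ω] (μ : Ω → ℝ) (h : Ω → ℝ) (B : Ω → Prop) : ℝ :=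
  (∑ ω : Ω, if B ω then μ ω * h ω else 0) / Pr μ B

/-- The expected total cost `J(g) = E[∑_{t=1}^T c_t(Z_t, X_t, U_t)]`. -/
noncomputable def J (c : ℕ → Z → (∀ i, X i) → (∀ i, U i) → ℝ)
    (μ : Omega T Z X W0 W → ℝ) (g : Strategy Z X U) : ℝ :=
  ∑ ω : Omega T Z X W0 W, μ ω *
    ∑ t ∈ Finset.range T,
      c t (Zp f0 f g t ω) (fun i => Xp f0 f g i t ω) (fun i => Up f0 f g i t ω)



/-! ### Auxiliary development -/

section Aux
set_option linter.unusedSectionVars false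

variable (g : Strategy Z X U) (z : ℕ → Z) (u : ℕ → ∀ j, U j)

/-- Local state trajectory of subsystem `j`, driven by fixed shared/action histories. -/
noncomputable def locX (j : Fin n) (x : X j) (w : Fin T → W j) : ℕ → X j
  | 0 => x
  | s + 1 => f j s (z s) (locX j x w s) (u s)
      (if h : s < T then w ⟨s, h⟩ else Classical.arbitrary (W j))

/-- Local action trajectory of subsystem `j`. -/
noncomputable def locU (j : Fin n) (x : X j) (w : Fin T → W j) (s : ℕ) : U j :=
  g j s (fun r => z r) (fun r => locX f z u j x w r) (fun r => u r)

lemma traj_apply_le (ω : Omega T Z X W0 W) :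
    ∀ s r (h : r ≤ s),
      ((traj f0 f g ω s).1 ⟨r, Nat.lt_succ_of_le h⟩ = Zp f0 f g r ω ∧
      (∀ j, (traj f0 f g ω s).2.1 j ⟨r, Nat.lt_succ_of_le h⟩ = Xp f0 f g j r ω) ∧
      ((traj f0 f g ω s).2.2 ⟨r, Nat.lt_succ_of_le h⟩ = fun j => Up f0 f g j r ω)) := by
  intro s
  induction s with
  | zero =>
    intro r h
    interval_cases r
    exact ⟨rfl, fun j => rfl, rfl⟩
  | succ s ih =>
    intro r h
    rcases Nat.lt_succ_iff_lt_or_eq.mp (Nat.lt_succ_of_le h) with h' | h'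
    · have hle : r ≤ s := Nat.lt_succ_iff.mp h'
      have hcast : (⟨r, Nat.lt_succ_of_le h⟩ : Fin (s + 2)) =
          Fin.castSucc ⟨r, Nat.lt_succ_of_le hle⟩ := rfl
      obtain ⟨h1, h2, h3⟩ := ih r hle
      refine ⟨?_, fun j => ?_, ?_⟩
      · show (Fin.snoc (traj f0 f g ω s).1 _ : Fin (s+2) → Z) _ = _
        rw [hcast, Fin.snoc_castSucc]; exact h1
      · show (Fin.snoc ((traj f0 f g ω s).2.1 j) _ : Fin (s+2) → X j) _ = _
        rw [hcast, Fin.snoc_castSucc]; exact h2 j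
      · show (Fin.snoc (traj f0 f g ω s).2.2 _ : Fin (s+2) → ∀ j, U j) _ = _
        rw [hcast, Fin.snoc_castSucc]; exact h3
    · subst h'
      exact ⟨rfl, fun j => rfl, rfl⟩

lemma Zp_zero (ω : Omega T Z X W0 W) : Zp f0 f g 0 ω = ω.1 := rfl

lemma Xp_zero (j : Fin n) (ω : Omega T Z X W0 W) : Xp f0 f g j 0 ω = ω.2.1 j := rfl

lemma Zp_succ (s : ℕ) (ω : Omega T Z X W0 W) :
    Zp f0 f g (s + 1) ω = f0 s (Zp f0 f g s ω) (fun j => Up f0 f g j s ω)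
      (if h : s < T then ω.2.2.1 ⟨s, h⟩ else Classical.arbitrary W0) := by
  show (Fin.snoc _ _ : Fin (s+2) → Z) (Fin.last (s+1)) = _
  rw [Fin.snoc_last]
  rfl

lemma Xp_succ (j : Fin n) (s : ℕ) (ω : Omega T Z X W0 W) :
    Xp f0 f g j (s + 1) ω = f j s (Zp f0 f g s ω) (Xp f0 f g j s ω)
      (fun j' => Up f0 f g j' s ω)
      (if h : s < T then ω.2.2.2 j ⟨s, h⟩ else Classical.arbitrary (W j)) := by
  show (Fin.snoc _ _ : Fin (s+2) → X j) (Fin.last (s+1)) = _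
  rw [Fin.snoc_last]
  rfl

lemma Up_zero (j : Fin n) (ω : Omega T Z X W0 W) :
    Up f0 f g j 0 ω = g j 0 (fun _ => ω.1) (fun _ => ω.2.1 j) (fun r => r.elim0) := rfl

lemma Up_succ (j : Fin n) (s : ℕ) (ω : Omega T Z X W0 W) :
    Up f0 f g j (s + 1) ω = g j (s + 1) (traj f0 f g ω (s + 1)).1
      ((traj f0 f g ω (s + 1)).2.1 j) (traj f0 f g ω s).2.2 := by
  show (Fin.snoc _ _ : Fin (s+2) → ∀ j, U j) (Fin.last (s+1)) j = _
  rw [Fin.snoc_last]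
  rfl

end Aux

section Aux2
set_option linter.unusedSectionVars false
variable (g : Strategy Z X U) (z : ℕ → Z) (u : ℕ → ∀ j, U j)

/-- Conditioning event: shared history and all past actions are pinned. -/
def Econd (t : ℕ) (ω : Omega T Z X W0 W) : Prop :=
  (∀ r ≤ t, Zp f0 f g r ω = z r) ∧ (∀ r < t, ∀ j, Up f0 f g j r ω = u r j)

lemma loc_eq (ω : Omega T Z X W0 W) (s : ℕ) (hE : Econd f0 f g z u s ω) :
    ∀ j, (∀ r ≤ s, Xp f0 f g j r ω = locX f z u j (ω.2.1 j) (ω.2.2.2 j) r) ∧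
         (∀ r ≤ s, Up f0 f g j r ω = locU f g z u j (ω.2.1 j) (ω.2.2.2 j) r) := by
  induction s with
  | zero =>
    intro j
    have hz : ω.1 = z 0 := hE.1 0 le_rfl
    constructor
    · intro r hr; interval_cases r; rfl
    · intro r hr; interval_cases r
      rw [Up_zero]
      have e1 : (fun _ : Fin 1 => ω.1) = (fun r : Fin 1 => z r) := by
        funext r
        have : (r : ℕ) = 0 := Nat.lt_one_iff.mp r.isLt
        rw [this, ← hz]
      have e2 : (fun _ : Fin 1 => ω.2.1 j)
          = (fun r : Fin 1 => locX f z u j (ω.2.1 j) (ω.2.2.2 j) r) := by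
        funext r
        have : (r : ℕ) = 0 := Nat.lt_one_iff.mp r.isLt
        rw [this]
        rfl
      have e3 : (fun r : Fin 0 => r.elim0 : Fin 0 → ∀ j, U j) = (fun r : Fin 0 => u r) := by
        funext r; exact r.elim0
      rw [e1, e2, e3]
      rfl
  | succ s ih =>
    have hEs : Econd f0 f g z u s ω :=
      ⟨fun r hr => hE.1 r (hr.trans (Nat.le_succ s)),
       fun r hr j => hE.2 r (hr.trans (Nat.lt_succ_self s)) j⟩
    have ihj := ih hEs
    intro j
    have hXnew : Xp f0 f g j (s + 1) ω = locX f z u j (ω.2.1 j) (ω.2.2.2 j) (s + 1) := by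
      rw [Xp_succ, hE.1 s (Nat.le_succ s), funext (fun j' => hE.2 s (Nat.lt_succ_self s) j'),
        (ihj j).1 s le_rfl]
      rfl
    have hXall : ∀ r ≤ s + 1, Xp f0 f g j r ω = locX f z u j (ω.2.1 j) (ω.2.2.2 j) r := by
      intro r hr
      rcases Nat.lt_or_ge r (s + 1) with h | h
      · exact (ihj j).1 r (Nat.lt_succ_iff.mp h)
      · have : r = s + 1 := le_antisymm hr h
        rw [this]; exact hXnew
    have hUnew : Up f0 f g j (s + 1) ω = locU f g z u j (ω.2.1 j) (ω.2.2.2 j) (s + 1) := by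
      rw [Up_succ]
      have e1 : (traj f0 f g ω (s + 1)).1 = fun r : Fin (s + 2) => z r := by
        funext r
        have h1 := (traj_apply_le f0 f g ω (s + 1) r.val (Nat.lt_succ_iff.mp r.isLt)).1
        exact h1.trans (hE.1 r.val (Nat.lt_succ_iff.mp r.isLt))
      have e2 : (traj f0 f g ω (s + 1)).2.1 j
          = fun r : Fin (s + 2) => locX f z u j (ω.2.1 j) (ω.2.2.2 j) r := by
        funext r
        have h1 := ((traj_apply_le f0 f g ω (s + 1) r.val (Nat.lt_succ_iff.mp r.isLt)).2.1) j
        exact h1.trans (hXall r.val (Nat.lt_succ_iff.mp r.isLt))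
      have e3 : (traj f0 f g ω s).2.2 = fun r : Fin (s + 1) => u r := by
        funext r
        have h1 := (traj_apply_le f0 f g ω s r.val (Nat.lt_succ_iff.mp r.isLt)).2.2
        exact h1.trans (funext fun j' => hE.2 r.val r.isLt j')
      rw [e1, e2, e3]
      rfl
    refine ⟨hXall, fun r hr => ?_⟩
    rcases Nat.lt_or_ge r (s + 1) with h | h
    · exact (ihj j).2 r (Nat.lt_succ_iff.mp h)
    · have : r = s + 1 := le_antisymm hr h
      rw [this]; exact hUnew

/-- Factorized form of the conditioning event. -/
def BaseC (t : ℕ) (ω : Omega T Z X W0 W) : Prop :=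
  ω.1 = z 0 ∧
  (∀ r < t, f0 r (z r) (u r)
      (if h : r < T then ω.2.2.1 ⟨r, h⟩ else Classical.arbitrary W0) = z (r + 1)) ∧
  (∀ r < t, ∀ j, locU f g z u j (ω.2.1 j) (ω.2.2.2 j) r = u r j)

lemma BaseC_of_Econd (t : ℕ) (ω : Omega T Z X W0 W) (hE : Econd f0 f g z u t ω) :
    BaseC f0 f g z u t ω := by
  refine ⟨hE.1 0 (Nat.zero_le t), fun r hr => ?_, fun r hr j => ?_⟩
  · have hz := hE.1 (r + 1) hr
    rw [Zp_succ, hE.1 r hr.le, funext (fun j => hE.2 r hr j)] at hz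
    exact hz
  · exact ((loc_eq f0 f g z u ω t hE j).2 r hr.le).symm.trans (hE.2 r hr j)

lemma Econd_of_BaseC (t : ℕ) (ω : Omega T Z X W0 W) (hB : BaseC f0 f g z u t ω) :
    Econd f0 f g z u t ω := by
  induction t with
  | zero =>
    exact ⟨fun r hr => by interval_cases r; exact hB.1, fun r hr j => absurd hr (by omega)⟩
  | succ t iht =>
    have hEt : Econd f0 f g z u t ω := iht
      ⟨hB.1, fun r hr => hB.2.1 r (hr.trans (Nat.lt_succ_self t)),
       fun r hr j => hB.2.2 r (hr.trans (Nat.lt_succ_self t)) j⟩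
    have hUs : ∀ j, Up f0 f g j t ω = u t j := fun j =>
      ((loc_eq f0 f g z u ω t hEt j).2 t le_rfl).trans (hB.2.2 t (Nat.lt_succ_self t) j)
    have hZs : Zp f0 f g (t + 1) ω = z (t + 1) := by
      rw [Zp_succ, hEt.1 t le_rfl, funext hUs]
      exact hB.2.1 t (Nat.lt_succ_self t)
    refine ⟨fun r hr => ?_, fun r hr j => ?_⟩
    · rcases Nat.lt_or_ge r (t + 1) with h | h
      · exact hEt.1 r (Nat.lt_succ_iff.mp h)
      · have : r = t + 1 := le_antisymm hr h
        rw [this]; exact hZs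
    · rcases Nat.lt_or_ge r t with h | h
      · exact hEt.2 r h j
      · have : r = t := by omega
        rw [this]; exact hUs j

end Aux2

section Aux3
set_option linter.unusedSectionVars false
variable (g : Strategy Z X U) (z : ℕ → Z) (u : ℕ → ∀ j, U j)
variable (i : Fin n) (t : ℕ) (xi : ℕ → X i) (ui : ℕ → U i)
variable (PZ : Z → ℝ) (PX : ∀ i, Z → X i → ℝ) (PW0 : W0 → ℝ) (PW : ∀ i, W i → ℝ)
variable (c : ℕ → Z → (∀ i, X i) → (∀ i, U i) → ℝ)

/-- Projection onto the primitive variables of subsystem `i`. -/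
def piProj (ω : Omega T Z X W0 W) : X i × (Fin T → W i) := (ω.2.1 i, ω.2.2.2 i)

/-- Replace the primitive variables of subsystem `i`. -/
def Rrep (ω : Omega T Z X W0 W) (p : X i × (Fin T → W i)) : Omega T Z X W0 W :=
  ⟨ω.1, Function.update ω.2.1 i p.1, ω.2.2.1, Function.update ω.2.2.2 i p.2⟩

lemma piProj_Rrep (ω : Omega T Z X W0 W) (p : X i × (Fin T → W i)) :
    piProj i (Rrep i ω p) = p := by
  simp [piProj, Rrep]

lemma Rrep_piProj (ω : Omega T Z X W0 W) : Rrep i ω (piProj i ω) = ω := by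
  simp [piProj, Rrep, Function.update_eq_self]

lemma Rrep_Rrep (ω : Omega T Z X W0 W) (q p : X i × (Fin T → W i)) :
    Rrep i (Rrep i ω q) p = Rrep i ω p := by
  simp [Rrep, Function.update_idem]

/-- Condition on the subsystem-`i` primitives corresponding to the event `A`. -/
def SAset (p : X i × (Fin T → W i)) : Prop :=
  (∀ r < t, locU f g z u i p.1 p.2 r = u r i) ∧
  (∀ s ≤ t, locX f z u i p.1 p.2 s = xi s) ∧
  (∀ s ≤ t, locU f g z u i p.1 p.2 s = ui s)

/-- Condition on the subsystem-`i` primitives corresponding to the event `B`. -/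
def SBset (p : X i × (Fin T → W i)) : Prop :=
  (∀ r < t, locU f g z u i p.1 p.2 r = u r i) ∧
  locX f z u i p.1 p.2 t = xi t ∧ locU f g z u i p.1 p.2 t = ui t

/-- Condition on the remaining primitives. -/
def BaseE (ω : Omega T Z X W0 W) : Prop :=
  ω.1 = z 0 ∧
  (∀ r < t, f0 r (z r) (u r)
      (if h : r < T then ω.2.2.1 ⟨r, h⟩ else Classical.arbitrary W0) = z (r + 1)) ∧
  (∀ j, j ≠ i → ∀ r < t, locU f g z u j (ω.2.1 j) (ω.2.2.2 j) r = u r j)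

lemma BaseC_split (ω : Omega T Z X W0 W)
    (hBE : BaseE f0 f g z u i t ω)
    (hCi : ∀ r < t, locU f g z u i (ω.2.1 i) (ω.2.2.2 i) r = u r i) :
    BaseC f0 f g z u t ω := by
  refine ⟨hBE.1, hBE.2.1, fun r hr j => ?_⟩
  by_cases hj : j = i
  · subst hj; exact hCi r hr
  · exact hBE.2.2 j hj r hr

lemma Aevent_iff (ω : Omega T Z X W0 W) :
    ((∀ s ≤ t, Xp f0 f g i s ω = xi s) ∧ (∀ s ≤ t, Zp f0 f g s ω = z s) ∧
      (∀ s < t, ∀ j, Up f0 f g j s ω = u s j) ∧ (∀ s ≤ t, Up f0 f g i s ω = ui s)) ↔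
    (BaseE f0 f g z u i t ω ∧ SAset f g z u i t xi ui (piProj i ω)) := by
  constructor
  · rintro ⟨h1, h2, h3, h4⟩
    have hE : Econd f0 f g z u t ω := ⟨h2, h3⟩
    have hB := BaseC_of_Econd f0 f g z u t ω hE
    have hloc := loc_eq f0 f g z u ω t hE
    refine ⟨⟨hB.1, hB.2.1, fun j _ r hr => hB.2.2 r hr j⟩,
      fun r hr => hB.2.2 r hr i, fun s hs => ?_, fun s hs => ?_⟩
    · exact ((hloc i).1 s hs).symm.trans (h1 s hs)
    · exact ((hloc i).2 s hs).symm.trans (h4 s hs)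
  · rintro ⟨hBE, hS⟩
    have hB := BaseC_split f0 f g z u i t ω hBE hS.1
    have hE := Econd_of_BaseC f0 f g z u t ω hB
    have hloc := loc_eq f0 f g z u ω t hE
    exact ⟨fun s hs => ((hloc i).1 s hs).trans (hS.2.1 s hs), hE.1, hE.2,
      fun s hs => ((hloc i).2 s hs).trans (hS.2.2 s hs)⟩

lemma Bevent_iff (ω : Omega T Z X W0 W) :
    (Xp f0 f g i t ω = xi t ∧ (∀ s ≤ t, Zp f0 f g s ω = z s) ∧
      (∀ s < t, ∀ j, Up f0 f g j s ω = u s j) ∧ Up f0 f g i t ω = ui t) ↔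
    (BaseE f0 f g z u i t ω ∧ SBset f g z u i t xi ui (piProj i ω)) := by
  constructor
  · rintro ⟨h1, h2, h3, h4⟩
    have hE : Econd f0 f g z u t ω := ⟨h2, h3⟩
    have hB := BaseC_of_Econd f0 f g z u t ω hE
    have hloc := loc_eq f0 f g z u ω t hE
    refine ⟨⟨hB.1, hB.2.1, fun j _ r hr => hB.2.2 r hr j⟩,
      fun r hr => hB.2.2 r hr i, ?_, ?_⟩
    · exact ((hloc i).1 t le_rfl).symm.trans h1
    · exact ((hloc i).2 t le_rfl).symm.trans h4
  · rintro ⟨hBE, hS⟩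
    have hB := BaseC_split f0 f g z u i t ω hBE hS.1
    have hE := Econd_of_BaseC f0 f g z u t ω hB
    have hloc := loc_eq f0 f g z u ω t hE
    exact ⟨((hloc i).1 t le_rfl).trans hS.2.1, hE.1, hE.2,
      ((hloc i).2 t le_rfl).trans hS.2.2⟩

lemma BaseE_Rrep (ω : Omega T Z X W0 W) (p : X i × (Fin T → W i)) :
    BaseE f0 f g z u i t (Rrep i ω p) ↔ BaseE f0 f g z u i t ω := by
  unfold BaseE Rrep
  constructor <;> rintro ⟨h1, h2, h3⟩ <;>
    refine ⟨h1, h2, fun j hj r hr => ?_⟩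
  · simpa [Function.update_of_ne hj] using h3 j hj r hr
  · simpa [Function.update_of_ne hj] using h3 j hj r hr

/-- The part of the weight depending only on the non-`i` primitives. -/
noncomputable def nuf (ω : Omega T Z X W0 W) : ℝ :=
  PZ ω.1 * (∏ j ∈ Finset.univ.erase i, PX j ω.1 (ω.2.1 j)) *
    (∏ t', PW0 (ω.2.2.1 t')) * (∏ j ∈ Finset.univ.erase i, ∏ t', PW j (ω.2.2.2 j t'))

/-- The part of the weight depending only on the `i`-primitives. -/
noncomputable def kapf (p : X i × (Fin T → W i)) : ℝ :=
  PX i (z 0) p.1 * ∏ t', PW i (p.2 t')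

lemma weight_eq (ω : Omega T Z X W0 W) (h1 : ω.1 = z 0) :
    weight PZ PX PW0 PW ω = kapf z i PX PW (piProj i ω) * nuf i PZ PX PW0 PW ω := by
  unfold weight nuf kapf piProj
  rw [h1, ← Finset.mul_prod_erase Finset.univ (fun j => PX j (z 0) (ω.2.1 j))
      (Finset.mem_univ i),
    ← Finset.mul_prod_erase Finset.univ (fun j => ∏ t', PW j (ω.2.2.2 j t'))
      (Finset.mem_univ i)]
  ring

lemma nuf_Rrep (ω : Omega T Z X W0 W) (p : X i × (Fin T → W i)) :
    nuf i PZ PX PW0 PW (Rrep i ω p) = nuf i PZ PX PW0 PW ω := by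
  have e1 : ∏ j ∈ Finset.univ.erase i, PX j ω.1 (Function.update ω.2.1 i p.1 j)
      = ∏ j ∈ Finset.univ.erase i, PX j ω.1 (ω.2.1 j) :=
    Finset.prod_congr rfl fun j hj => by
      rw [Function.update_of_ne (Finset.ne_of_mem_erase hj)]
  have e2 : ∏ j ∈ Finset.univ.erase i, ∏ t', PW j (Function.update ω.2.2.2 i p.2 j t')
      = ∏ j ∈ Finset.univ.erase i, ∏ t', PW j (ω.2.2.2 j t') :=
    Finset.prod_congr rfl fun j hj => by
      rw [Function.update_of_ne (Finset.ne_of_mem_erase hj)]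
  simp only [nuf, Rrep]
  rw [e1, e2]

/-- The instantaneous cost as a function of the non-`i` primitives on the events. -/
noncomputable def Hf (ω : Omega T Z X W0 W) : ℝ :=
  c t (z t)
    (Function.update (fun j => locX f z u j (ω.2.1 j) (ω.2.2.2 j) t) i (xi t))
    (Function.update (fun j => locU f g z u j (ω.2.1 j) (ω.2.2.2 j) t) i (ui t))

lemma Hf_Rrep (ω : Omega T Z X W0 W) (p : X i × (Fin T → W i)) :
    Hf f g z u i t xi ui c (Rrep i ω p) = Hf f g z u i t xi ui c ω := by
  have e1 : Function.update (fun j => locX f z u j (Function.update ω.2.1 i p.1 j)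
        (Function.update ω.2.2.2 i p.2 j) t) i (xi t)
      = Function.update (fun j => locX f z u j (ω.2.1 j) (ω.2.2.2 j) t) i (xi t) := by
    funext j
    by_cases hj : j = i
    · subst hj; rw [Function.update_self, Function.update_self]
    · rw [Function.update_of_ne hj, Function.update_of_ne hj,
        Function.update_of_ne hj, Function.update_of_ne hj]
  have e2 : Function.update (fun j => locU f g z u j (Function.update ω.2.1 i p.1 j)
        (Function.update ω.2.2.2 i p.2 j) t) i (ui t)
      = Function.update (fun j => locU f g z u j (ω.2.1 j) (ω.2.2.2 j) t) i (ui t) := by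
    funext j
    by_cases hj : j = i
    · subst hj; rw [Function.update_self, Function.update_self]
    · rw [Function.update_of_ne hj, Function.update_of_ne hj,
        Function.update_of_ne hj, Function.update_of_ne hj]
  simp only [Hf, Rrep]
  rw [e1, e2]

lemma cost_eq_Hf (ω : Omega T Z X W0 W)
    (hBE : BaseE f0 f g z u i t ω)
    (hCi : ∀ r < t, locU f g z u i (ω.2.1 i) (ω.2.2.2 i) r = u r i)
    (hx : locX f z u i (ω.2.1 i) (ω.2.2.2 i) t = xi t)
    (hu : locU f g z u i (ω.2.1 i) (ω.2.2.2 i) t = ui t) :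
    c t (Zp f0 f g t ω) (fun j => Xp f0 f g j t ω) (fun j => Up f0 f g j t ω)
      = Hf f g z u i t xi ui c ω := by
  have hE := Econd_of_BaseC f0 f g z u t ω (BaseC_split f0 f g z u i t ω hBE hCi)
  have hloc := loc_eq f0 f g z u ω t hE
  have e1 : (fun j => Xp f0 f g j t ω)
      = Function.update (fun j => locX f z u j (ω.2.1 j) (ω.2.2.2 j) t) i (xi t) := by
    funext j
    by_cases hj : j = i
    · subst hj; rw [Function.update_self]
      exact ((hloc j).1 t le_rfl).trans hx
    · rw [Function.update_of_ne hj]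
      exact (hloc j).1 t le_rfl
  have e2 : (fun j => Up f0 f g j t ω)
      = Function.update (fun j => locU f g z u j (ω.2.1 j) (ω.2.2.2 j) t) i (ui t) := by
    funext j
    by_cases hj : j = i
    · subst hj; rw [Function.update_self]
      exact ((hloc j).2 t le_rfl).trans hu
    · rw [Function.update_of_ne hj]
      exact (hloc j).2 t le_rfl
  rw [hE.1 t le_rfl, e1, e2]
  rfl

lemma key_fiber (Bse : Omega T Z X W0 W → Prop)
    (hBse : ∀ ω p, Bse (Rrep i ω p) ↔ Bse ω)
    (G : Omega T Z X W0 W → ℝ) (hG : ∀ ω p, G (Rrep i ω p) = G ω)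
    (p q : X i × (Fin T → W i)) :
    (∑ ω : Omega T Z X W0 W, if Bse ω ∧ piProj i ω = p then G ω else 0)
      = ∑ ω : Omega T Z X W0 W, if Bse ω ∧ piProj i ω = q then G ω else 0 := by
  rw [← Finset.sum_filter, ← Finset.sum_filter]
  refine Finset.sum_nbij' (fun ω => Rrep i ω q) (fun ω => Rrep i ω p) ?_ ?_ ?_ ?_ ?_
  · intro ω hω
    rw [Finset.mem_filter] at *
    exact ⟨Finset.mem_univ _, (hBse ω q).mpr hω.2.1, piProj_Rrep i ω q⟩
  · intro ω hω
    rw [Finset.mem_filter] at *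
    exact ⟨Finset.mem_univ _, (hBse ω p).mpr hω.2.1, piProj_Rrep i ω p⟩
  · intro ω hω
    rw [Finset.mem_filter] at hω
    show Rrep i (Rrep i ω q) p = ω
    rw [Rrep_Rrep, ← hω.2.2, Rrep_piProj]
  · intro ω hω
    rw [Finset.mem_filter] at hω
    show Rrep i (Rrep i ω p) q = ω
    rw [Rrep_Rrep, ← hω.2.2, Rrep_piProj]
  · intro ω _
    exact (hG ω q).symm

lemma sum_factor (Bse : Omega T Z X W0 W → Prop)
    (hBse : ∀ ω p, Bse (Rrep i ω p) ↔ Bse ω)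
    (G : Omega T Z X W0 W → ℝ) (hG : ∀ ω p, G (Rrep i ω p) = G ω)
    (S : X i × (Fin T → W i) → Prop) (p0 : X i × (Fin T → W i)) :
    (∑ ω : Omega T Z X W0 W,
        if Bse ω ∧ S (piProj i ω) then kapf z i PX PW (piProj i ω) * G ω else 0)
      = (∑ p : X i × (Fin T → W i), if S p then kapf z i PX PW p else 0) *
        (∑ ω : Omega T Z X W0 W, if Bse ω ∧ piProj i ω = p0 then G ω else 0) := by
  calc
    (∑ ω : Omega T Z X W0 W,
        if Bse ω ∧ S (piProj i ω) then kapf z i PX PW (piProj i ω) * G ω else 0)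
      = ∑ ω : Omega T Z X W0 W,
          (if S (piProj i ω) then kapf z i PX PW (piProj i ω) else 0) *
            (if Bse ω then G ω else 0) := by
        refine Finset.sum_congr rfl fun ω _ => ?_
        by_cases h1 : Bse ω <;> by_cases h2 : S (piProj i ω) <;> simp [h1, h2]
    _ = ∑ ω : Omega T Z X W0 W, ∑ p : X i × (Fin T → W i),
          if piProj i ω = p then
            (if S p then kapf z i PX PW p else 0) * (if Bse ω then G ω else 0)
          else 0 := by
        refine Finset.sum_congr rfl fun ω _ => ?_
        rw [Finset.sum_ite_eq Finset.univ (piProj i ω)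
          (fun p => (if S p then kapf z i PX PW p else 0) * (if Bse ω then G ω else 0))]
        simp
    _ = ∑ p : X i × (Fin T → W i), ∑ ω : Omega T Z X W0 W,
          if piProj i ω = p then
            (if S p then kapf z i PX PW p else 0) * (if Bse ω then G ω else 0)
          else 0 := Finset.sum_comm
    _ = ∑ p : X i × (Fin T → W i), (if S p then kapf z i PX PW p else 0) *
          ∑ ω : Omega T Z X W0 W, if Bse ω ∧ piProj i ω = p then G ω else 0 := by
        refine Finset.sum_congr rfl fun p _ => ?_
        rw [Finset.mul_sum]
        refine Finset.sum_congr rfl fun ω _ => ?_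
        by_cases h1 : Bse ω <;> by_cases h2 : piProj i ω = p <;> simp [h1, h2]
    _ = ∑ p : X i × (Fin T → W i), (if S p then kapf z i PX PW p else 0) *
          ∑ ω : Omega T Z X W0 W, if Bse ω ∧ piProj i ω = p0 then G ω else 0 := by
        refine Finset.sum_congr rfl fun p _ => ?_
        rw [key_fiber i Bse hBse G hG p p0]
    _ = _ := by rw [← Finset.sum_mul]

end Aux3

/-- Lemma 1, part 2: in the full observation model, for an arbitrary but
fixed control strategy `g`, with `Rⁱ_t = (Xⁱ_t, Z_{1:t}, U_{1:t-1})`, the instantaneous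
conditional cost simplifies:
`E[c_t(Z_t, X_t, U_t) | Rⁱ_{1:t} = rⁱ_{1:t}, Uⁱ_{1:t} = uⁱ_{1:t}]
  = E[c_t(Z_t, X_t, U_t) | Rⁱ_t = rⁱ_t, Uⁱ_t = uⁱ_t]`.
Conditioning on `Rⁱ_{1:t} = rⁱ_{1:t}, Uⁱ_{1:t} = uⁱ_{1:t}` fixes
`(Xⁱ_{1:t}, Z_{1:t}, U_{1:t-1}, Uⁱ_{1:t})`, while conditioning on `Rⁱ_t = rⁱ_t, Uⁱ_t = uⁱ_t`
fixes `(Xⁱ_t, Z_{1:t}, U_{1:t-1}, Uⁱ_t)`. -/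
theorem full_obs_conditional_cost
    (PZ : Z → ℝ) (PX : ∀ i, Z → X i → ℝ) (PW0 : W0 → ℝ) (PW : ∀ i, W i → ℝ)
    (hPZ : IsLaw PZ) (hPX : ∀ i z, IsLaw (PX i z))
    (hPW0 : IsLaw PW0) (hPW : ∀ i, IsLaw (PW i))
    (c : ℕ → Z → (∀ i, X i) → (∀ i, U i) → ℝ)
    (g : Strategy Z X U) (i : Fin n)
    (t : ℕ) (ht : t < T)
    (xi : ℕ → X i) (z : ℕ → Z) (u : ℕ → ∀ j, U j) (ui : ℕ → U i)
    (hpos1 : 0 < Pr (weight (T := T) PZ PX PW0 PW)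
      (fun ω => (∀ s ≤ t, Xp f0 f g i s ω = xi s) ∧ (∀ s ≤ t, Zp f0 f g s ω = z s) ∧
        (∀ s < t, ∀ j, Up f0 f g j s ω = u s j) ∧ (∀ s ≤ t, Up f0 f g i s ω = ui s)))
    (hpos2 : 0 < Pr (weight (T := T) PZ PX PW0 PW)
      (fun ω => Xp f0 f g i t ω = xi t ∧ (∀ s ≤ t, Zp f0 f g s ω = z s) ∧
        (∀ s < t, ∀ j, Up f0 f g j s ω = u s j) ∧ Up f0 f g i t ω = ui t)) :
    CondExp (weight (T := T) PZ PX PW0 PW)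
        (fun ω => c t (Zp f0 f g t ω) (fun j => Xp f0 f g j t ω) (fun j => Up f0 f g j t ω))
        (fun ω => (∀ s ≤ t, Xp f0 f g i s ω = xi s) ∧ (∀ s ≤ t, Zp f0 f g s ω = z s) ∧
          (∀ s < t, ∀ j, Up f0 f g j s ω = u s j) ∧ (∀ s ≤ t, Up f0 f g i s ω = ui s)) =
      CondExp (weight (T := T) PZ PX PW0 PW)
        (fun ω => c t (Zp f0 f g t ω) (fun j => Xp f0 f g j t ω) (fun j => Up f0 f g j t ω))
        (fun ω => Xp f0 f g i t ω = xi t ∧ (∀ s ≤ t, Zp f0 f g s ω = z s) ∧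
          (∀ s < t, ∀ j, Up f0 f g j s ω = u s j) ∧ Up f0 f g i t ω = ui t) := by
  classical
  obtain ⟨p0⟩ : Nonempty (X i × (Fin T → W i)) := inferInstance
  have hBse : ∀ (ω : Omega T Z X W0 W) (p : X i × (Fin T → W i)),
      BaseE f0 f g z u i t (Rrep i ω p) ↔ BaseE f0 f g z u i t ω :=
    fun ω p => BaseE_Rrep f0 f g z u i t ω p
  have hGνH : ∀ (ω : Omega T Z X W0 W) p,
      nuf i PZ PX PW0 PW (Rrep i ω p) * Hf f g z u i t xi ui c (Rrep i ω p)
        = nuf i PZ PX PW0 PW ω * Hf f g z u i t xi ui c ω := by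
    intro ω p
    rw [nuf_Rrep, Hf_Rrep]
  have key : ∀ (Ev : Omega T Z X W0 W → Prop) (S : X i × (Fin T → W i) → Prop),
      (∀ ω, Ev ω ↔ BaseE f0 f g z u i t ω ∧ S (piProj i ω)) →
      (∀ p, S p → (∀ r < t, locU f g z u i p.1 p.2 r = u r i) ∧
        locX f z u i p.1 p.2 t = xi t ∧ locU f g z u i p.1 p.2 t = ui t) →
      0 < Pr (weight (T := T) PZ PX PW0 PW) Ev →
      CondExp (weight (T := T) PZ PX PW0 PW)
          (fun ω => c t (Zp f0 f g t ω) (fun j => Xp f0 f g j t ω) (fun j => Up f0 f g j t ω))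
          Ev
        = (∑ ω : Omega T Z X W0 W, if BaseE f0 f g z u i t ω ∧ piProj i ω = p0 then
              nuf i PZ PX PW0 PW ω * Hf f g z u i t xi ui c ω else 0) /
          (∑ ω : Omega T Z X W0 W, if BaseE f0 f g z u i t ω ∧ piProj i ω = p0 then
              nuf i PZ PX PW0 PW ω else 0) := by
    intro Ev S hEvIff hSprop hpos
    have hnum : (∑ ω : Omega T Z X W0 W, if Ev ω then weight (T := T) PZ PX PW0 PW ω *
          (c t (Zp f0 f g t ω) (fun j => Xp f0 f g j t ω) (fun j => Up f0 f g j t ω)) else 0)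
        = (∑ p : X i × (Fin T → W i), if S p then kapf z i PX PW p else 0) *
          (∑ ω : Omega T Z X W0 W, if BaseE f0 f g z u i t ω ∧ piProj i ω = p0 then
              nuf i PZ PX PW0 PW ω * Hf f g z u i t xi ui c ω else 0) := by
      rw [← sum_factor z i PX PW (BaseE f0 f g z u i t) hBse
        (fun ω => nuf i PZ PX PW0 PW ω * Hf f g z u i t xi ui c ω) hGνH S p0]
      refine Finset.sum_congr rfl fun ω _ => ?_
      by_cases hEv : Ev ω
      · have h' := (hEvIff ω).mp hEv
        obtain ⟨c1, c2, c3⟩ := hSprop _ h'.2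
        rw [if_pos hEv, if_pos h',
          weight_eq z i PZ PX PW0 PW ω h'.1.1,
          cost_eq_Hf f0 f g z u i t xi ui c ω h'.1 c1 c2 c3]
        ring
      · rw [if_neg hEv, if_neg (fun hc => hEv ((hEvIff ω).mpr hc))]
    have hden : (∑ ω : Omega T Z X W0 W,
          if Ev ω then weight (T := T) PZ PX PW0 PW ω else 0)
        = (∑ p : X i × (Fin T → W i), if S p then kapf z i PX PW p else 0) *
          (∑ ω : Omega T Z X W0 W, if BaseE f0 f g z u i t ω ∧ piProj i ω = p0 then
              nuf i PZ PX PW0 PW ω else 0) := by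
      rw [← sum_factor z i PX PW (BaseE f0 f g z u i t) hBse
        (fun ω => nuf i PZ PX PW0 PW ω) (fun ω p => nuf_Rrep i PZ PX PW0 PW ω p) S p0]
      refine Finset.sum_congr rfl fun ω _ => ?_
      by_cases hEv : Ev ω
      · have h' := (hEvIff ω).mp hEv
        rw [if_pos hEv, if_pos h', weight_eq z i PZ PX PW0 PW ω h'.1.1]
      · rw [if_neg hEv, if_neg (fun hc => hEv ((hEvIff ω).mpr hc))]
    have hpos' : 0 < (∑ p : X i × (Fin T → W i), if S p then kapf z i PX PW p else 0) *
        (∑ ω : Omega T Z X W0 W, if BaseE f0 f g z u i t ω ∧ piProj i ω = p0 then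
            nuf i PZ PX PW0 PW ω else 0) := by
      rw [← hden]; exact hpos
    have hKS : (∑ p : X i × (Fin T → W i), if S p then kapf z i PX PW p else 0) ≠ 0 :=
      left_ne_zero_of_mul (ne_of_gt hpos')
    show (∑ ω : Omega T Z X W0 W, if Ev ω then weight (T := T) PZ PX PW0 PW ω *
          (c t (Zp f0 f g t ω) (fun j => Xp f0 f g j t ω) (fun j => Up f0 f g j t ω)) else 0) /
        (∑ ω : Omega T Z X W0 W, if Ev ω then weight (T := T) PZ PX PW0 PW ω else 0) = _
    rw [hnum, hden]
    exact mul_div_mul_left _ _ hKS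
  have eA := key
    (fun ω => (∀ s ≤ t, Xp f0 f g i s ω = xi s) ∧ (∀ s ≤ t, Zp f0 f g s ω = z s) ∧
      (∀ s < t, ∀ j, Up f0 f g j s ω = u s j) ∧ (∀ s ≤ t, Up f0 f g i s ω = ui s))
    (SAset f g z u i t xi ui)
    (fun ω => Aevent_iff f0 f g z u i t xi ui ω)
    (fun p hp => ⟨hp.1, hp.2.1 t le_rfl, hp.2.2 t le_rfl⟩)
    hpos1
  have eB := key
    (fun ω => Xp f0 f g i t ω = xi t ∧ (∀ s ≤ t, Zp f0 f g s ω = z s) ∧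
      (∀ s < t, ∀ j, Up f0 f g j s ω = u s j) ∧ Up f0 f g i t ω = ui t)
    (SBset f g z u i t xi ui)
    (fun ω => Bevent_iff f0 f g z u i t xi ui ω)
    (fun p hp => hp)
    hpos2
  exact eA.trans eB.symm

end ControlSharing
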